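/- arXiv:1508.07703 — 6 statements merged into one kernel-verified Lean document; each statement's English description precedes it below -/
import Mathlib

section
/- For any topological space X, the submonoid of self-maps of the power set of X generated by the complement operator and the closure operator has cardinality at most 14. -/
set_option maxHeartbeats 2000000 in
private lemma kur_monoid {M : Type*} [Monoid M] {c k : M} (hcc : c * c = 1) (hkk : k * k = k)
    (h7 : k * c * k * c * k * c * k = k * c * k) {x : M}
    (hx : x ∈ Submonoid.closure ({c, k} : Set M)) :
    x ∈ ({1, c, k, c * k, k * c, c * (k * c), k * (c * k), c * (k * (c * k)), k * (c * (k * c)),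
      c * (k * (c * (k * c))), k * (c * (k * (c * k))), c * (k * (c * (k * (c * k)))),
      k * (c * (k * (c * (k * c)))), c * (k * (c * (k * (c * (k * c)))))} : Set M) := by
  have hcc' : ∀ x : M, c * (c * x) = x := fun x => by rw [← mul_assoc, hcc, one_mul]
  have hkk' : ∀ x : M, k * (k * x) = k * x := fun x => by rw [← mul_assoc, hkk]
  have h7r : k * (c * (k * (c * (k * (c * k))))) = k * (c * k) := by
    simpa [mul_assoc] using h7
  have h8r : k * (c * (k * (c * (k * (c * (k * c)))))) = k * (c * (k * c)) := by
    have := congrArg (· * c) h7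
    simpa [mul_assoc] using this
  induction hx using Submonoid.closure_induction_left with
  | one => left; rfl
  | mul_left g hg y hy ih =>
    simp only [Set.mem_insert_iff, Set.mem_singleton_iff] at ih ⊢
    rcases hg with rfl | rfl <;>
      rcases ih with rfl | rfl | rfl | rfl | rfl | rfl | rfl | rfl | rfl | rfl | rfl | rfl
        | rfl | rfl <;>
      simp [hcc, hkk, hcc', hkk', h7r, h8r, mul_one]

set_option maxHeartbeats 2000000 in
theorem kuratowski_14 (X : Type*) [TopologicalSpace X] :
    Nat.card (Submonoid.closure
      ({(fun A => Aᶜ), (fun A => closure A)} : Set (Function.End (Set X)))) ≤ 14 := by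
  set c : Function.End (Set X) := fun A => Aᶜ with hc_def
  set k : Function.End (Set X) := fun A => closure A with hk_def
  have hcc : c * c = 1 := funext fun A => compl_compl A
  have hkk : k * k = k := funext fun A => closure_closure
  have h7 : k * c * k * c * k * c * k = k * c * k := by
    funext A
    show closure ((closure ((closure ((closure A)ᶜ))ᶜ))ᶜ) = closure ((closure A)ᶜ)
    set s := (closure A)ᶜ with hs_def
    have hs : IsOpen s := isClosed_closure.isOpen_compl
    apply subset_antisymm
    · have h : (closure ((closure s)ᶜ))ᶜ ⊆ closure s := by
        rw [closure_compl, compl_compl]; exact interior_subset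
      calc closure ((closure ((closure s)ᶜ))ᶜ) ⊆ closure (closure s) := closure_mono h
        _ = closure s := closure_closure
    · apply closure_mono
      rw [closure_compl, compl_compl]
      exact hs.subset_interior_iff.mpr subset_closure
  have hcm : c ∈ Submonoid.closure ({c, k} : Set (Function.End (Set X))) :=
    Submonoid.subset_closure (Set.mem_insert _ _)
  have hkm : k ∈ Submonoid.closure ({c, k} : Set (Function.End (Set X))) :=
    Submonoid.subset_closure (Set.mem_insert_of_mem _ rfl)
  set M := Submonoid.closure ({c, k} : Set (Function.End (Set X))) with hM_def
  let f : Fin 14 → M :=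
    ![⟨1, one_mem M⟩, ⟨c, hcm⟩, ⟨k, hkm⟩, ⟨c * k, mul_mem hcm hkm⟩, ⟨k * c, mul_mem hkm hcm⟩,
      ⟨c * (k * c), mul_mem hcm (mul_mem hkm hcm)⟩,
      ⟨k * (c * k), mul_mem hkm (mul_mem hcm hkm)⟩,
      ⟨c * (k * (c * k)), mul_mem hcm (mul_mem hkm (mul_mem hcm hkm))⟩,
      ⟨k * (c * (k * c)), mul_mem hkm (mul_mem hcm (mul_mem hkm hcm))⟩,
      ⟨c * (k * (c * (k * c))), mul_mem hcm (mul_mem hkm (mul_mem hcm (mul_mem hkm hcm)))⟩,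
      ⟨k * (c * (k * (c * k))), mul_mem hkm (mul_mem hcm (mul_mem hkm (mul_mem hcm hkm)))⟩,
      ⟨c * (k * (c * (k * (c * k)))),
        mul_mem hcm (mul_mem hkm (mul_mem hcm (mul_mem hkm (mul_mem hcm hkm))))⟩,
      ⟨k * (c * (k * (c * (k * c)))),
        mul_mem hkm (mul_mem hcm (mul_mem hkm (mul_mem hcm (mul_mem hkm hcm))))⟩,
      ⟨c * (k * (c * (k * (c * (k * c))))),
        mul_mem hcm (mul_mem hkm (mul_mem hcm (mul_mem hkm (mul_mem hcm (mul_mem hkm hcm)))))⟩]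
  have hsurj : Function.Surjective f := by
    rintro ⟨x, hx⟩
    have hmem := kur_monoid hcc hkk h7 hx
    simp only [Set.mem_insert_iff, Set.mem_singleton_iff] at hmem
    rcases hmem with rfl | rfl | rfl | rfl | rfl | rfl | rfl | rfl | rfl | rfl | rfl | rfl
      | rfl | rfl
    · exact ⟨0, rfl⟩
    · exact ⟨1, rfl⟩
    · exact ⟨2, rfl⟩
    · exact ⟨3, rfl⟩
    · exact ⟨4, rfl⟩
    · exact ⟨5, rfl⟩
    · exact ⟨6, rfl⟩
    · exact ⟨7, rfl⟩
    · exact ⟨8, rfl⟩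
    · exact ⟨9, rfl⟩
    · exact ⟨10, rfl⟩
    · exact ⟨11, rfl⟩
    · exact ⟨12, rfl⟩
    · exact ⟨13, rfl⟩
  calc Nat.card M ≤ Nat.card (Fin 14) := Nat.card_le_card_of_surjective f hsurj
    _ = 14 := by simp
end

section
/- Let M be a partially ordered monoid and let y₁, y₂, x₁, x₂ be idempotents with x₁ ≤ x₂ ≤ 1 ≤ y₁ ≤ y₂. Then y₂·x₂·y₁·x₁ = y₂·x₁ in M. -/
theorem reduce_yxyx {M : Type*} [Monoid M] [PartialOrder M]
    [CovariantClass M M (· * ·) (· ≤ ·)] [CovariantClass M M (Function.swap (· * ·)) (· ≤ ·)]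
    (x₁ x₂ y₁ y₂ : M)
    (hx₁ : x₁ * x₁ = x₁) (hx₂ : x₂ * x₂ = x₂) (hy₁ : y₁ * y₁ = y₁) (hy₂ : y₂ * y₂ = y₂)
    (h12 : x₁ ≤ x₂) (h21 : x₂ ≤ 1) (h1y : (1 : M) ≤ y₁) (hyy : y₁ ≤ y₂) :
    y₂ * x₂ * y₁ * x₁ = y₂ * x₁ := by
  apply le_antisymm
  · calc y₂ * x₂ * y₁ * x₁ ≤ y₂ * 1 * y₂ * x₁ := by
          exact mul_le_mul_left (mul_le_mul' (mul_le_mul_right h21 y₂) hyy) x₁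
    _ = y₂ * x₁ := by rw [mul_one, hy₂]
  · calc y₂ * x₁ = y₂ * x₁ * 1 * x₁ := by rw [mul_one, mul_assoc, hx₁]
    _ ≤ y₂ * x₂ * y₁ * x₁ :=
          mul_le_mul_left (mul_le_mul' (mul_le_mul_right h12 y₂) h1y) x₁
end

section
/- For all natural numbers n, p, l with n, p ≥ 1: 1 + n + p + Σ_{a=0}^{n-1} Σ_{b=0}^{p-1} C(a+b+2, b+1)² = Σ_{a=0}^{n} Σ_{b=0}^{p} C(a+b, a)·C(a+b, b). -/
/-!
On the right, every term with `a = 0` or `b = 0` equals `1`, which accounts for `1 + n + p`;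
on the remaining terms `C(a+b, a) = C(a+b, b)`, so each is a square matching the left sum.
-/

open Finset

theorem Finset.sum_range_succ_sum_range_succ_eq {M : Type*} [AddCommMonoid M] (f : ℕ → ℕ → M)
    (n p : ℕ) :
    ∑ a ∈ range (n + 1), ∑ b ∈ range (p + 1), f a b =
      f 0 0 + ∑ b ∈ range p, f 0 (b + 1) + ∑ a ∈ range n, f (a + 1) 0 +
        ∑ a ∈ range n, ∑ b ∈ range p, f (a + 1) (b + 1) := by
  simp only [sum_range_succ' _ n, sum_range_succ' _ p, sum_add_distrib]
  abel

theorem Nat.choose_add_mul_choose_add (a b : ℕ) :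
    (a + b).choose a * (a + b).choose b = (a + b).choose a ^ 2 := by
  rw [← Nat.choose_symm_add, sq]

theorem K_sum_identity_general (n p : ℕ) :
    1 + n + p + ∑ a ∈ Finset.range n, ∑ b ∈ Finset.range p,
      (Nat.choose (a + b + 2) (b + 1)) ^ 2 =
    ∑ a ∈ Finset.range (n + 1), ∑ b ∈ Finset.range (p + 1),
      Nat.choose (a + b) a * Nat.choose (a + b) b := by
  rw [sum_range_succ_sum_range_succ_eq]
  have interior (a b : ℕ) :
      (a + 1 + (b + 1)).choose (a + 1) * (a + 1 + (b + 1)).choose (b + 1) =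
        (a + b + 2).choose (b + 1) ^ 2 := by
    rw [Nat.choose_add_mul_choose_add, Nat.choose_symm_add,
      show a + 1 + (b + 1) = a + b + 2 by ring]
  simp only [interior, zero_add, add_zero, Nat.choose_zero_right, Nat.choose_self, mul_one,
    sum_const, card_range, smul_eq_mul]
  ring

theorem K_sum_identity (n p : ℕ) (hn : 1 ≤ n) (hp : 1 ≤ p) :
    1 + n + p + ∑ a ∈ Finset.range n, ∑ b ∈ Finset.range p,
      (Nat.choose (a + b + 2) (b + 1)) ^ 2 =
    ∑ a ∈ Finset.range (n + 1), ∑ b ∈ Finset.range (p + 1),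
      Nat.choose (a + b) a * Nat.choose (a + b) b :=
  K_sum_identity_general n p
end

section
/- Define K(n) = Σ_{i,j=0}^{n} C(i+j,i)·C(i+j,j). Then lim_{n→∞} K(n)/C(2n,n)² = 16/9. -/
/-!
Put `i = n - a`, `j = n - b`, so that the `(i, j)` term of `K n` is `C(i + j, i) ^ 2` and
`(a, b)` measures the distance from the corner `(n, n)`. Moving one step away from the corner
multiplies `C(i + j, i) / C(2n, n)` by `(n - b) / (2n - a - b) → 1/2`, so the normalised terms
tend to `4 ^ -(a + b)`, whose sum over `ℕ × ℕ` is `(4/3) ^ 2 = 16/9`. Dominated convergence applies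
because `2 C(m, k) ≤ C(m + 2, k + 1)` gives `C(i + j, i) ^ 2 ≤ 2 ^ (1 - a - b) C(2n, n) ^ 2`.
-/

open Filter Finset Topology

theorem Nat.choose_mul_two_pow_le_choose (m k j : ℕ) :
    m.choose k * 2 ^ j ≤ (m + 2 * j).choose (k + j) := by
  induction j with
  | zero => simp
  | succ j ih =>
    set M := m + 2 * j
    have pascal_twice : 2 * M.choose (k + j) ≤ (M + 1 + 1).choose (k + j + 1) := by
      have h₁ : (M + 1 + 1).choose (k + j + 1) =
          (M + 1).choose (k + j) + (M + 1).choose (k + j + 1) := Nat.choose_succ_succ' _ _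
      have h₂ : (M + 1).choose (k + j + 1) = M.choose (k + j) + M.choose (k + j + 1) :=
        Nat.choose_succ_succ' _ _
      have h₃ : M.choose (k + j) ≤ (M + 1).choose (k + j) := Nat.choose_le_succ _ _
      omega
    calc m.choose k * 2 ^ (j + 1) = 2 * (m.choose k * 2 ^ j) := by ring
      _ ≤ 2 * M.choose (k + j) := by gcongr
      _ ≤ (m + 2 * (j + 1)).choose (k + (j + 1)) := pascal_twice

theorem Nat.choose_sub_add_sub_mul_two_pow_le_centralBinom {n a b : ℕ} (ha : a ≤ n)
    (hb : b ≤ n) : (n - a + (n - b)).choose (n - a) * 2 ^ ((a + b) / 2) ≤ n.centralBinom :=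
  calc (n - a + (n - b)).choose (n - a) * 2 ^ ((a + b) / 2)
      ≤ (n - a + (n - b) + 2 * ((a + b) / 2)).choose (n - a + (a + b) / 2) :=
        Nat.choose_mul_two_pow_le_choose _ _ _
    _ ≤ (2 * n).choose (n - a + (a + b) / 2) := Nat.choose_le_choose _ (by omega)
    _ ≤ n.centralBinom := Nat.choose_le_centralBinom _ _

theorem sum_range_sum_range_choose_mul_choose (n : ℕ) :
    ∑ i ∈ range (n + 1), ∑ j ∈ range (n + 1), (i + j).choose i * (i + j).choose j =
      ∑ a ∈ range (n + 1), ∑ b ∈ range (n + 1), (n - a + (n - b)).choose (n - a) ^ 2 := by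
  rw [← sum_range_reflect]
  refine sum_congr rfl fun a _ => ?_
  rw [← sum_range_reflect]
  refine sum_congr rfl fun b _ => ?_
  rw [add_tsub_cancel_right, ← Nat.choose_symm_add, sq]

theorem tendsto_sub_div_two_mul_sub (b c : ℝ) :
    Tendsto (fun n : ℕ => ((n : ℝ) - b) / (2 * n - c)) atTop (𝓝 (1 / 2)) := by
  have h : Tendsto (fun n : ℕ => (1 - b / n) / (2 - c / n)) atTop (𝓝 ((1 - 0) / (2 - 0))) :=
    (tendsto_const_nhds.sub (tendsto_const_div_atTop_nhds_zero_nat b)).div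
      (tendsto_const_nhds.sub (tendsto_const_div_atTop_nhds_zero_nat c)) (by norm_num)
  norm_num at h
  refine h.congr' ?_
  filter_upwards [eventually_ne_atTop 0] with n hn
  have hn : (n : ℝ) ≠ 0 := Nat.cast_ne_zero.mpr hn
  rw [one_sub_div hn, sub_div' hn, div_div_div_cancel_right₀ hn, mul_comm]

/-- Its square is the `(n - a, n - b)` term of `K n` divided by `C(2n, n) ^ 2`. -/
noncomputable def cornerRatio (n a b : ℕ) : ℝ :=
  ((n - a + (n - b)).choose (n - a) : ℝ) / (2 * n).choose n

theorem cornerRatio_comm (n a b : ℕ) : cornerRatio n a b = cornerRatio n b a := by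
  rw [cornerRatio, cornerRatio, Nat.choose_symm_add, add_comm]

theorem cornerRatio_succ_right {n a b : ℕ} (ha : a ≤ n) (hb : b < n) :
    cornerRatio n a (b + 1) = cornerRatio n a b * ((n - b) / (2 * n - a - b)) := by
  have step := Nat.choose_mul_succ_eq (n - a + (n - (b + 1))) (n - a)
  rw [show n - a + (n - (b + 1)) + 1 = n - a + (n - b) by omega,
    show n - a + (n - b) - (n - a) = n - b by omega] at step
  have step_real : ((n - a + (n - (b + 1))).choose (n - a) : ℝ) * (2 * n - a - b)
      = ((n - a + (n - b)).choose (n - a) : ℝ) * (n - b) := by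
    have := congrArg (Nat.cast : ℕ → ℝ) step
    push_cast [ha, hb.le] at this
    linear_combination this
  have hpos : (0 : ℝ) < 2 * n - a - b := by
    have : (a + b : ℝ) < 2 * n := by exact_mod_cast (by omega : a + b < 2 * n)
    linarith
  have hD : ((2 * n).choose n : ℝ) ≠ 0 :=
    Nat.cast_ne_zero.mpr (Nat.choose_pos (by omega)).ne'
  rw [cornerRatio, cornerRatio]
  field_simp
  rw [eq_div_iff (by linarith)]
  linear_combination step_real

theorem tendsto_cornerRatio_succ_right {a b : ℕ} {L : ℝ}
    (h : Tendsto (fun n => cornerRatio n a b) atTop (𝓝 L)) :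
    Tendsto (fun n => cornerRatio n a (b + 1)) atTop (𝓝 (L * (1 / 2))) := by
  refine (h.mul (tendsto_sub_div_two_mul_sub b (a + b))).congr' ?_
  filter_upwards [eventually_gt_atTop (a + b)] with n hn
  rw [cornerRatio_succ_right (a := a) (by omega) (by omega), sub_sub]

theorem tendsto_cornerRatio (a b : ℕ) :
    Tendsto (fun n => cornerRatio n a b) atTop (𝓝 ((1 / 2) ^ a * (1 / 2) ^ b)) := by
  induction b with
  | zero =>
    simp only [pow_zero, mul_one, cornerRatio_comm _ a 0]
    induction a with
    | zero =>
      have h₀ (n : ℕ) : cornerRatio n 0 0 = 1 := by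
        rw [cornerRatio, Nat.sub_zero, ← two_mul, div_self]
        exact Nat.cast_ne_zero.mpr (Nat.choose_pos (by omega)).ne'
      simpa only [h₀, pow_zero] using tendsto_const_nhds
    | succ a ih => rw [pow_succ]; exact tendsto_cornerRatio_succ_right ih
  | succ b ih => rw [pow_succ, ← mul_assoc]; exact tendsto_cornerRatio_succ_right ih

theorem sq_cornerRatio_le {n a b : ℕ} (ha : a ≤ n) (hb : b ≤ n) :
    cornerRatio n a b ^ 2 ≤ 2 * ((1 / 2) ^ a * (1 / 2) ^ b) := by
  set q := (a + b) / 2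
  have hD : (0 : ℝ) < (2 * n).choose n := Nat.cast_pos.mpr (Nat.choose_pos (by omega))
  have hr : 0 ≤ cornerRatio n a b := by unfold cornerRatio; positivity
  have hrq : cornerRatio n a b * 2 ^ q ≤ 1 := by
    have h := Nat.choose_sub_add_sub_mul_two_pow_le_centralBinom ha hb
    rw [Nat.centralBinom_eq_two_mul_choose] at h
    rw [cornerRatio, div_mul_eq_mul_div, div_le_one hD]
    exact_mod_cast h
  have hpow : (2 : ℝ) ^ (a + b) ≤ 2 * (2 ^ q) ^ 2 := by
    rw [← pow_mul, ← pow_succ']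
    exact pow_le_pow_right₀ (by norm_num) (by omega)
  rw [← pow_add, one_div_pow, mul_one_div, le_div_iff₀ (by positivity)]
  calc cornerRatio n a b ^ 2 * 2 ^ (a + b) ≤ cornerRatio n a b ^ 2 * (2 * (2 ^ q) ^ 2) := by
        gcongr
    _ = 2 * (cornerRatio n a b * 2 ^ q) ^ 2 := by ring
    _ ≤ 2 := by nlinarith [pow_le_one₀ (by positivity) hrq (n := 2)]

theorem tsum_sq_half_pow_mul_half_pow :
    ∑' p : ℕ × ℕ, ((1 / 2 : ℝ) ^ p.1 * (1 / 2) ^ p.2) ^ 2 = 16 / 9 := by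
  have quarter_pow (k : ℕ) : ((1 / 2 : ℝ) ^ k) ^ 2 = (1 / 4) ^ k := by
    rw [← pow_mul, mul_comm, pow_mul]; norm_num
  have summable_quarter_pow : Summable fun k : ℕ => ‖(1 / 4 : ℝ) ^ k‖ := by
    simpa using summable_geometric_of_lt_one (r := 1 / 4) (by norm_num) (by norm_num)
  simp_rw [mul_pow, quarter_pow]
  rw [← tsum_mul_tsum_of_summable_norm summable_quarter_pow summable_quarter_pow,
    tsum_geometric_of_lt_one (by norm_num) (by norm_num)]
  norm_num

theorem tendsto_sum_sq_cornerRatio :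
    Tendsto (fun n => ∑ a ∈ range (n + 1), ∑ b ∈ range (n + 1), cornerRatio n a b ^ 2) atTop
      (𝓝 (16 / 9)) := by
  let square (n : ℕ) : Set (ℕ × ℕ) := ↑(range (n + 1) ×ˢ range (n + 1))
  have mem_square {n : ℕ} {p : ℕ × ℕ} : p ∈ square n ↔ p.1 ≤ n ∧ p.2 ≤ n := by
    simp only [square, coe_product, coe_range, Set.mem_prod, Set.mem_Iio, Nat.lt_succ_iff]
  have sum_eq_tsum (n : ℕ) : ∑ a ∈ range (n + 1), ∑ b ∈ range (n + 1), cornerRatio n a b ^ 2 =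
      ∑' p, (square n).indicator (fun p => cornerRatio n p.1 p.2 ^ 2) p := by
    rw [← sum_product', sum_eq_tsum_indicator]
  have summable_bound : Summable fun p : ℕ × ℕ => 2 * ((1 / 2 : ℝ) ^ p.1 * (1 / 2) ^ p.2) :=
    have h := summable_geometric_of_lt_one (r := (1 / 2 : ℝ)) (by norm_num) (by norm_num)
    (h.mul_of_nonneg h (fun _ => by positivity) (fun _ => by positivity)).mul_left 2
  have pointwise (p : ℕ × ℕ) : Tendsto (fun n => (square n).indicator
      (fun p => cornerRatio n p.1 p.2 ^ 2) p) atTop (𝓝 (((1 / 2) ^ p.1 * (1 / 2) ^ p.2) ^ 2)) := by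
    refine ((tendsto_cornerRatio p.1 p.2).pow 2).congr' ?_
    filter_upwards [eventually_ge_atTop p.1, eventually_ge_atTop p.2] with n h₁ h₂
    rw [Set.indicator_of_mem (mem_square.mpr ⟨h₁, h₂⟩)]
  have dominated (n : ℕ) (p : ℕ × ℕ) : ‖(square n).indicator
      (fun p => cornerRatio n p.1 p.2 ^ 2) p‖ ≤ 2 * ((1 / 2) ^ p.1 * (1 / 2) ^ p.2) := by
    by_cases hp : p ∈ square n
    · rw [Set.indicator_of_mem hp, Real.norm_of_nonneg (sq_nonneg _)]
      exact sq_cornerRatio_le (mem_square.mp hp).1 (mem_square.mp hp).2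
    · rw [Set.indicator_of_notMem hp, norm_zero]
      positivity
  simp_rw [sum_eq_tsum]
  rw [← tsum_sq_half_pow_mul_half_pow]
  exact tendsto_tsum_of_dominated_convergence summable_bound pointwise
    (Eventually.of_forall dominated)

open Filter in
theorem k_tendsto :
    Tendsto (fun n : ℕ =>
      ((∑ i ∈ Finset.range (n + 1), ∑ j ∈ Finset.range (n + 1),
          Nat.choose (i + j) i * Nat.choose (i + j) j : ℕ) : ℝ) /
        ((2 * n).choose n : ℝ) ^ 2)
      atTop (nhds (16 / 9)) := by
  refine tendsto_sum_sq_cornerRatio.congr fun n => ?_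
  simp only [cornerRatio, div_pow, ← sum_div, sum_range_sum_range_choose_mul_choose]
  push_cast
  rfl
end

section
/- Call a pair of topologies (τ₀, τ₁) with τ₀ ⊆ τ₁ on a set X saturated if every nonempty τ₀-open set has nonempty τ₁-interior and every nonempty τ₁-open set has nonempty τ₀-interior. If (τ₀, τ₁) is saturated, then for every subset A of X: cl₀(int₁(A)) = cl₀(int₀(A)), where clᵢ, intᵢ denote closure and interior in τᵢ. -/
open Set Topology

section TwoTopologies

variable {X : Type*} {t₀ t₁ : TopologicalSpace X}

theorem interior_subset_interior_of_le (h : t₁ ≤ t₀) (s : Set X) :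
    @interior X t₀ s ⊆ @interior X t₁ s :=
  @interior_maximal X t₁ _ _ (@interior_subset X t₀ s) (h _ (@isOpen_interior X t₀ s))

/-- A point of `U` and a `t₀`-neighbourhood `o` of it give the nonempty `t₁`-open set `o ∩ U`,
whose nonempty `t₀`-interior lies in `o ∩ interior[t₀] U`. -/
theorem subset_closure_interior_of_isOpen (hle : t₁ ≤ t₀)
    (h10 : ∀ U : Set X, IsOpen[t₁] U → U.Nonempty → (@interior X t₀ U).Nonempty)
    {U : Set X} (hU : IsOpen[t₁] U) : U ⊆ closure[t₀] (@interior X t₀ U) := by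
  intro x hxU
  rw [@mem_closure_iff X t₀]
  intro o ho hxo
  obtain ⟨y, hy⟩ := h10 (o ∩ U) ((hle o ho).inter hU) ⟨x, hxo, hxU⟩
  exact ⟨y, (@interior_subset X t₀ _ _ hy).1, @interior_mono X t₀ _ _ inter_subset_right _ hy⟩

end TwoTopologies

theorem saturated_closure_interior_general {X : Type*} (t₀ t₁ : TopologicalSpace X)
    (hle : ∀ U : Set X, @IsOpen X t₀ U → @IsOpen X t₁ U)
    (h10 : ∀ U : Set X, @IsOpen X t₁ U → U.Nonempty → (@interior X t₀ U).Nonempty)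
    (A : Set X) :
    @closure X t₀ (@interior X t₁ A) = @closure X t₀ (@interior X t₀ A) := by
  have ht : t₁ ≤ t₀ := hle
  refine subset_antisymm ?_ (@closure_mono X t₀ _ _ (interior_subset_interior_of_le ht A))
  have hint : @interior X t₁ A ⊆ @closure X t₀ (@interior X t₀ A) :=
    (subset_closure_interior_of_isOpen ht h10 (@isOpen_interior X t₁ A)).trans
      (@closure_mono X t₀ _ _ (@interior_mono X t₀ _ _ (@interior_subset X t₁ A)))
  exact @closure_minimal X t₀ _ _ hint (@isClosed_closure X t₀ _)

theorem saturated_closure_interior {X : Type*} (t₀ t₁ : TopologicalSpace X)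
    (hle : ∀ U : Set X, @IsOpen X t₀ U → @IsOpen X t₁ U)
    (h01 : ∀ U : Set X, @IsOpen X t₀ U → U.Nonempty → (@interior X t₁ U).Nonempty)
    (h10 : ∀ U : Set X, @IsOpen X t₁ U → U.Nonempty → (@interior X t₀ U).Nonempty)
    (A : Set X) :
    @closure X t₀ (@interior X t₁ A) = @closure X t₀ (@interior X t₀ A) :=
  saturated_closure_interior_general t₀ t₁ hle h10 A
end

section
/- There exists a countable set X with two metrizable topologies τ₀ and τ₁ and a subset A ⊆ X such that the sets (cl₁ ∘ cl₀)ⁿ(A) for n ∈ ℕ are pairwise distinct, where clᵢ denotes closure in τᵢ. In particular, the monoid generated by the two closure operators in the monoid of self-maps of P(X) is infinite. -/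
/-!
Take `X = ℕ × ℕ`, with `(m, k)` the `k`-th point of level `m`. In `τ_r` the points of each
level `m ≡ r (mod 2)` are grouped, via `Nat.pair`, into sequences converging to the points of
level `m + 1`, and every other point is isolated; `τ_r` is induced by an injection into
`ℕ × ℕ × ℝ`, hence metrizable. So the `τ_r`-closure of the points of level `≤ m` is the set of
points of level `≤ m + 1`, and `(cl₁ ∘ cl₀)ⁿ` sends level `0` to the points of level `≤ 2n`.
-/

open Set Filter Topology Function

theorem Submonoid.infinite_of_injective_pow {M : Type*} [Monoid M] {S : Submonoid M} {x : M}
    (hx : x ∈ S) (h : Injective fun n : ℕ => x ^ n) : Infinite S :=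
  Infinite.of_injective (fun n => ⟨x ^ n, pow_mem hx n⟩) fun _ _ hmn => h congr($hmn.1)

namespace KuratowskiBitopological

/-- For `m % 2 = r`, the points `(m, Nat.pair j i)` converge to `(m + 1, j)` as `i → ∞`. -/
noncomputable def fanEmbedding (r : ℕ) (p : ℕ × ℕ) : ℕ × ℕ × ℝ :=
  if p.1 % 2 = r then (p.1 + 1, p.2.unpair.1, 1 / (p.2.unpair.2 + 1 : ℝ)) else (p.1, p.2, 0)

theorem fanEmbedding_injective (r : ℕ) : Injective (fanEmbedding r) := by
  rintro ⟨k, a⟩ ⟨l, b⟩ h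
  unfold fanEmbedding at h
  split_ifs at h
  · simp only [Prod.mk.injEq, add_left_inj, one_div, inv_inj, Nat.cast_inj] at h
    obtain ⟨rfl, h₁, h₂⟩ := h
    rw [← Nat.pair_unpair a, ← Nat.pair_unpair b, h₁, h₂]
  · exact absurd congr($h.2.2) (by positivity)
  · exact absurd congr($h.2.2).symm (by positivity)
  · simp_all

noncomputable abbrev fanTopology (r : ℕ) : TopologicalSpace (ℕ × ℕ) :=
  .induced (fanEmbedding r) inferInstance

theorem metrizableSpace_fanTopology (r : ℕ) :
    @TopologicalSpace.MetrizableSpace _ (fanTopology r) :=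
  let := fanTopology r
  (fanEmbedding_injective r).isEmbedding_induced.metrizableSpace

theorem isClosed_fanTopology_fst_preimage_Iic {r m : ℕ} (hm : m % 2 = r) :
    IsClosed[fanTopology r] (Prod.fst ⁻¹' Iic (m + 1)) := by
  have hlevel : Prod.fst ⁻¹' Iic (m + 1) =
      fanEmbedding r ⁻¹' (Prod.fst ⁻¹' Iic (m + 1)) := by
    ext ⟨k, a⟩
    simp only [fanEmbedding, mem_preimage, mem_Iic]
    split_ifs <;> omega
  let := fanTopology r
  rw [hlevel]
  exact ((isClosed_discrete _).preimage continuous_fst).preimage continuous_induced_dom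

theorem tendsto_fanEmbedding_pair {r m : ℕ} (hm : m % 2 = r) (j : ℕ) :
    Tendsto (fun i => fanEmbedding r (m, Nat.pair j i)) atTop
      (𝓝 (fanEmbedding r (m + 1, j))) := by
  have hm' : (m + 1) % 2 ≠ r := by omega
  simp only [fanEmbedding, hm, hm', if_true, if_false, Nat.unpair_pair]
  exact tendsto_const_nhds.prodMk_nhds
    (tendsto_const_nhds.prodMk_nhds tendsto_one_div_add_atTop_nhds_zero_nat)

theorem closure_fanTopology_fst_preimage_Iic {r m : ℕ} (hm : m % 2 = r) :
    closure[fanTopology r] (Prod.fst ⁻¹' Iic m) = Prod.fst ⁻¹' Iic (m + 1) := by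
  let := fanTopology r
  refine (closure_minimal (fun p hp => Nat.le_succ_of_le hp)
    (isClosed_fanTopology_fst_preimage_Iic hm)).antisymm ?_
  rintro ⟨k, j⟩ (hk : k ≤ m + 1)
  obtain hk | rfl := hk.lt_or_eq
  · exact subset_closure (Nat.lt_succ_iff.mp hk)
  · exact closure_induced.mpr <| mem_closure_of_tendsto (tendsto_fanEmbedding_pair hm j)
      (.of_forall fun i => mem_image_of_mem _ (le_refl m))

theorem iterate_closure_fst_preimage_Iic_zero (n : ℕ) :
    (fun S => closure[fanTopology 1] (closure[fanTopology 0] S))^[n] (Prod.fst ⁻¹' Iic 0) =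
      Prod.fst ⁻¹' Iic (2 * n) := by
  induction n with
  | zero => rfl
  | succ n ih =>
    rw [iterate_succ_apply', ih, closure_fanTopology_fst_preimage_Iic (by omega),
      closure_fanTopology_fst_preimage_Iic (by omega)]
    rfl

end KuratowskiBitopological

open KuratowskiBitopological

theorem infinite_kuratowski_bitopological :
    ∃ (X : Type) (t₀ t₁ : TopologicalSpace X), Countable X ∧
      @TopologicalSpace.MetrizableSpace X t₀ ∧
      @TopologicalSpace.MetrizableSpace X t₁ ∧
      (∃ A : Set X, Function.Injective
        (fun n : ℕ => (fun S : Set X => @closure X t₁ (@closure X t₀ S))^[n] A)) ∧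
      Infinite (Submonoid.closure
        ({(fun S => @closure X t₀ S), (fun S => @closure X t₁ S)} :
          Set (Function.End (Set X)))) := by
  refine ⟨ℕ × ℕ, fanTopology 0, fanTopology 1, inferInstance, metrizableSpace_fanTopology 0,
    metrizableSpace_fanTopology 1, ?_⟩
  have hA : Injective fun n : ℕ =>
      (fun S => closure[fanTopology 1] (closure[fanTopology 0] S))^[n] (Prod.fst ⁻¹' Iic 0) := by
    simp only [iterate_closure_fst_preimage_Iic_zero]
    exact (preimage_injective.mpr Prod.fst_surjective).comp
      (Iic_injective.comp (mul_right_injective₀ two_ne_zero))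
  -- powers in `Function.End` are iterates, so `hA` says the powers of `cl₁ * cl₀` are distinct
  refine ⟨⟨_, hA⟩, Submonoid.infinite_of_injective_pow
    (mul_mem (Submonoid.subset_closure (mem_insert_of_mem _ rfl))
      (Submonoid.subset_closure (mem_insert _ _)))
    (hA.of_comp (f := fun F : Function.End (Set (ℕ × ℕ)) => F (Prod.fst ⁻¹' Iic 0)))⟩
end
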